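/- If (b_1,...,b_m) satisfies M_m(b_1,...,b_m) = β·Id with β ∈ {±1} and (a_1,...,a_n) satisfies M_n(a_1,...,a_n) = α·Id with α ∈ {±1}, then the sum (a_1,...,a_n) ⊕ (b_1,...,b_m) := (a_1+b_m, a_2,...,a_{n-1}, a_n+b_1, b_2,...,b_{m-1}), of length n+m-2, satisfies M_{n+m-2}((a_1,...,a_n) ⊕ (b_1,...,b_m)) = -αβ·Id. -/
import Mathlib


open Matrix

/-- `Mlist [a₁,…,aₙ] = M(aₙ)⋯M(a₁)` where `M(a) = [[a,-1],[1,0]]`. -/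
def Mlist {A : Type*} [CommRing A] (l : List A) : Matrix (Fin 2) (Fin 2) A :=
  ((l.map (fun a => !![a, -1; 1, 0])).reverse).prod

/-- The continuant `K` (tridiagonal determinant), with `K [] = 1`. -/
def cont {A : Type*} [CommRing A] : List A → A
  | [] => 1
  | [a] => a
  | a :: b :: l => a * cont (b :: l) - cont l

/-- `(a₁,…,aₙ) ⊕ (b₁,…,bₘ) = (a₁+bₘ, a₂,…,aₙ₋₁, aₙ+b₁, b₂,…,bₘ₋₁)` (for lists of length ≥ 2). -/
def oplus {A : Type*} [CommRing A] (la lb : List A) : List A :=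
  match la, lb with
  | a1 :: ta, b1 :: tb =>
      (a1 + tb.getLastD b1) :: (ta.dropLast ++ ((ta.getLastD a1 + b1) :: tb.dropLast))
  | _, _ => []

lemma Mlist_cons {A : Type*} [CommRing A] (a : A) (l : List A) :
    Mlist (a :: l) = Mlist l * !![a, -1; 1, 0] := by
  simp [Mlist]

lemma Mlist_append {A : Type*} [CommRing A] (l1 l2 : List A) :
    Mlist (l1 ++ l2) = Mlist l2 * Mlist l1 := by
  simp [Mlist]

lemma N_mul_M {A : Type*} [CommRing A] (a : A) :
    !![0, 1; -1, a] * !![a, -1; 1, 0] = 1 := by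
  ext i j
  fin_cases i <;> fin_cases j <;> simp [Matrix.mul_apply, Fin.sum_univ_succ]

lemma M_mul_N {A : Type*} [CommRing A] (a : A) :
    !![a, -1; 1, 0] * !![0, 1; -1, a] = 1 := by
  ext i j
  fin_cases i <;> fin_cases j <;> simp [Matrix.mul_apply, Fin.sum_univ_succ]

lemma key_matrix_identity {A : Type*} [CommRing A] (a1 an b1 bm : A) :
    !![0, 1; -1, bm] * !![0, 1; -1, b1] * !![an + b1, -1; 1, 0] *
      (!![0, 1; -1, an] * !![0, 1; -1, a1]) * !![a1 + bm, -1; 1, 0] =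
      -(1 : Matrix (Fin 2) (Fin 2) A) := by
  ext i j
  fin_cases i <;> fin_cases j <;>
    simp [Matrix.mul_apply, Fin.sum_univ_succ, Matrix.one_apply] <;> ring

theorem stmt8 {A : Type*} [CommRing A] (la lb : List A) (hla : 2 ≤ la.length)
    (hlb : 2 ≤ lb.length) (α β : A) (hα : α = 1 ∨ α = -1) (hβ : β = 1 ∨ β = -1)
    (ha : Mlist la = α • 1) (hb : Mlist lb = β • 1) :
    Mlist (oplus la lb) = (-(α * β)) • 1 := by
  obtain ⟨a1, ta, rfl⟩ : ∃ a t, la = a :: t := by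
    cases la with
    | nil => simp at hla
    | cons a t => exact ⟨a, t, rfl⟩
  obtain ⟨b1, tb, rfl⟩ : ∃ b t, lb = b :: t := by
    cases lb with
    | nil => simp at hlb
    | cons b t => exact ⟨b, t, rfl⟩
  have hta : ta ≠ [] := by rintro rfl; simp at hla
  have htb : tb ≠ [] := by rintro rfl; simp at hlb
  obtain ⟨ma, an, rfl⟩ : ∃ m x, ta = m ++ [x] :=
    ⟨ta.dropLast, ta.getLast hta, (List.dropLast_append_getLast hta).symm⟩
  obtain ⟨mb, bm, rfl⟩ : ∃ m x, tb = m ++ [x] :=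
    ⟨tb.dropLast, tb.getLast htb, (List.dropLast_append_getLast htb).symm⟩
  have hop : oplus (a1 :: (ma ++ [an])) (b1 :: (mb ++ [bm])) =
      (a1 + bm) :: (ma ++ ((an + b1) :: mb)) := by
    simp [oplus, List.getLastD_concat, List.dropLast_concat]
  rw [hop]
  -- Extract the middle products from ha and hb.
  have ha' : !![an, -1; 1, 0] * Mlist ma * !![a1, -1; 1, 0] = α • 1 := by
    rw [← ha, Mlist_cons, Mlist_append]
    simp [Mlist, mul_assoc]
  have hb' : !![bm, -1; 1, 0] * Mlist mb * !![b1, -1; 1, 0] = β • 1 := by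
    rw [← hb, Mlist_cons, Mlist_append]
    simp [Mlist, mul_assoc]
  have hQa : Mlist ma = α • (!![0, 1; -1, an] * !![0, 1; -1, a1]) := by
    have := congrArg (fun X => !![0, 1; -1, an] * X * !![0, 1; -1, a1]) ha'
    calc Mlist ma
        = !![0, 1; -1, an] * (!![an, -1; 1, 0] * Mlist ma * !![a1, -1; 1, 0]) *
            !![0, 1; -1, a1] := by
          simp only [← mul_assoc]
          rw [N_mul_M, one_mul, mul_assoc, M_mul_N, mul_one]
      _ = !![0, 1; -1, an] * (α • 1) * !![0, 1; -1, a1] := by rw [ha']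
      _ = α • (!![0, 1; -1, an] * !![0, 1; -1, a1]) := by
          rw [mul_smul_comm, smul_mul_assoc, mul_one]
  have hQb : Mlist mb = β • (!![0, 1; -1, bm] * !![0, 1; -1, b1]) := by
    calc Mlist mb
        = !![0, 1; -1, bm] * (!![bm, -1; 1, 0] * Mlist mb * !![b1, -1; 1, 0]) *
            !![0, 1; -1, b1] := by
          simp only [← mul_assoc]
          rw [N_mul_M, one_mul, mul_assoc, M_mul_N, mul_one]
      _ = !![0, 1; -1, bm] * (β • 1) * !![0, 1; -1, b1] := by rw [hb']
      _ = β • (!![0, 1; -1, bm] * !![0, 1; -1, b1]) := by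
          rw [mul_smul_comm, smul_mul_assoc, mul_one]
  rw [Mlist_cons, Mlist_append, Mlist_cons, hQa, hQb]
  simp only [smul_mul_assoc, mul_smul_comm, smul_smul]
  rw [show !![0, 1; -1, bm] * !![0, 1; -1, b1] * !![an + b1, -1; 1, 0] *
      (!![0, 1; -1, an] * !![0, 1; -1, a1]) * !![a1 + bm, -1; 1, 0] =
      -(1 : Matrix (Fin 2) (Fin 2) A) from key_matrix_identity a1 an b1 bm]
  rw [smul_neg, ← neg_smul]
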